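/- On R^4 with coordinates (x1,x2,x3,x4), define the bivector P' by the nonzero entries P'^{12} = p'_{12} - (a44 + p'_{24}) x2 + a23 x3 + a24 x4 + p'_{13} x4 + a44 x3 x4, P'^{13} = p'_{13} + a44 x3, P'^{14} = (p'_{24} + a44) x4, P'^{24} = p'_{24} (and antisymmetric counterparts, all other entries zero), where all lowercase symbols are real constants. Then the Schouten bracket [P',P'] vanishes identically, i.e. the associated bracket {f,g} = P'^{μν} ∂_μ f ∂_ν g satisfies the Jacobi identity. -/

import Mathlib

open scoped BigOperators

noncomputable def pd {m : ℕ} (μ : Fin m) (f : (Fin m → ℝ) → ℝ) (x : Fin m → ℝ) : ℝ :=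
  fderiv ℝ f x (Pi.single μ 1)

/-- Poisson bracket associated to a bivector field `P`. -/
noncomputable def pbrk {m : ℕ} (P : (Fin m → ℝ) → Fin m → Fin m → ℝ)
    (f g : (Fin m → ℝ) → ℝ) (x : Fin m → ℝ) : ℝ :=
  ∑ μ, ∑ ν, P x μ ν * pd μ f x * pd ν g x

/-- Schouten bracket `[P,P]^{λμν}`. -/
noncomputable def schouten {m : ℕ} (P : (Fin m → ℝ) → Fin m → Fin m → ℝ)
    (l μ ν : Fin m) (x : Fin m → ℝ) : ℝ :=
  ∑ ρ, (P x ρ l * pd ρ (fun y => P y μ ν) x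
      + P x ρ ν * pd ρ (fun y => P y l μ) x
      + P x ρ μ * pd ρ (fun y => P y ν l) x)

/-- Mixed Schouten bracket `[P,Q]^{λμν}`. -/
noncomputable def schoutenMixed {m : ℕ} (P Q : (Fin m → ℝ) → Fin m → Fin m → ℝ)
    (l μ ν : Fin m) (x : Fin m → ℝ) : ℝ :=
  ∑ ρ, (P x ρ l * pd ρ (fun y => Q y μ ν) x + Q x ρ l * pd ρ (fun y => P y μ ν) x
      + P x ρ ν * pd ρ (fun y => Q y l μ) x + Q x ρ ν * pd ρ (fun y => P y l μ) x
      + P x ρ μ * pd ρ (fun y => Q y ν l) x + Q x ρ μ * pd ρ (fun y => P y ν l) x)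

/-- The Poisson bivector `P` on the group `A_{4,1}`. -/
noncomputable def P41 (p12 p14 p23 : ℝ) : (Fin 4 → ℝ) → Fin 4 → Fin 4 → ℝ :=
  fun x μ ν =>
    !![0, p12 + p23 / 2 * (x 3) ^ 2, p23 * x 3, p14;
       -(p12 + p23 / 2 * (x 3) ^ 2), 0, p23, 0;
       -(p23 * x 3), -p23, 0, 0;
       -p14, 0, 0, 0] μ ν

/-- The Poisson bivector `P'` on the group `A_{4,1}`. -/
noncomputable def P41' (p12' p13' p24' a23 a24 a44 : ℝ) : (Fin 4 → ℝ) → Fin 4 → Fin 4 → ℝ :=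
  fun x μ ν =>
    let A := p12' - (a44 + p24') * x 1 + a23 * x 2 + a24 * x 3 + p13' * x 3 + a44 * x 2 * x 3
    let B := p13' + a44 * x 2
    let C := (p24' + a44) * x 3
    !![0, A, B, C;
       -A, 0, 0, p24';
       -B, 0, 0, 0;
       -C, -p24', 0, 0] μ ν

section Aux

variable {m : ℕ} {f g : (Fin m → ℝ) → ℝ} {x : Fin m → ℝ} {b : Fin m}

lemma pd_const (c : ℝ) : pd b (fun _ => c) x = 0 := by simp [pd]

lemma pd_coord (i : Fin m) : pd b (fun y => y i) x = if i = b then 1 else 0 := by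
  have : (fun y : Fin m → ℝ => y i)
      = (ContinuousLinearMap.proj (R := ℝ) (φ := fun _ : Fin m => ℝ) i) := rfl
  rw [pd, this, ContinuousLinearMap.fderiv]
  simp [Pi.single_apply]

lemma pd_add (hf : DifferentiableAt ℝ f x) (hg : DifferentiableAt ℝ g x) :
    pd b (fun y => f y + g y) x = pd b f x + pd b g x := by
  simp [pd, fderiv_fun_add hf hg]

lemma pd_sub (hf : DifferentiableAt ℝ f x) (hg : DifferentiableAt ℝ g x) :
    pd b (fun y => f y - g y) x = pd b f x - pd b g x := by
  simp [pd, fderiv_fun_sub hf hg]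

lemma pd_neg : pd b (fun y => -f y) x = -pd b f x := by
  simp [pd, fderiv_neg]

lemma pd_mul (hf : DifferentiableAt ℝ f x) (hg : DifferentiableAt ℝ g x) :
    pd b (fun y => f y * g y) x = pd b f x * g x + f x * pd b g x := by
  simp [pd, fderiv_fun_mul hf hg]; ring

lemma pd_sum {n : ℕ} (F : Fin n → (Fin m → ℝ) → ℝ) (hF : ∀ i, DifferentiableAt ℝ (F i) x) :
    pd b (fun y => ∑ i, F i y) x = ∑ i, pd b (F i) x := by
  simp [pd, fderiv_fun_sum (fun i _ => hF i)]

lemma contDiff_pd (hf : ContDiff ℝ (⊤ : ℕ∞) f) (a : Fin m) : ContDiff ℝ (⊤ : ℕ∞) (fun y => pd a f y) := by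
  have h1 : ContDiff ℝ (⊤ : ℕ∞) (fderiv ℝ f) := hf.fderiv_right (by simp)
  exact (ContinuousLinearMap.apply ℝ ℝ (Pi.single a 1)).contDiff.comp h1

lemma pd_pd (hf : ContDiff ℝ (⊤ : ℕ∞) f) (a : Fin m) (x : Fin m → ℝ) :
    pd b (fun y => pd a f y) x = fderiv ℝ (fderiv ℝ f) x (Pi.single b 1) (Pi.single a 1) := by
  have h1 : ContDiff ℝ (⊤ : ℕ∞) (fderiv ℝ f) := hf.fderiv_right (by simp)
  have : (fun y => pd a f y)
      = (ContinuousLinearMap.apply ℝ ℝ (Pi.single a 1)) ∘ (fderiv ℝ f) := rfl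
  rw [pd, this, fderiv_comp x (ContinuousLinearMap.apply ℝ ℝ (Pi.single a 1)).differentiableAt
    (h1.differentiable (by simp) x)]
  simp

lemma pd_pd_symm (hf : ContDiff ℝ (⊤ : ℕ∞) f) (a b : Fin m) (x : Fin m → ℝ) :
    pd b (fun y => pd a f y) x = pd a (fun y => pd b f y) x := by
  rw [pd_pd hf, pd_pd hf]
  exact (hf.contDiffAt.isSymmSndFDerivAt (by rw [minSmoothness_of_isRCLikeNormedField]; exact WithTop.coe_le_coe.mpr le_top)).eq _ _

lemma pd_pbrk {P : (Fin m → ℝ) → Fin m → Fin m → ℝ}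
    (hP : ∀ μ ν, Differentiable ℝ (fun y => P y μ ν))
    {g h : (Fin m → ℝ) → ℝ} (hg : ContDiff ℝ (⊤ : ℕ∞) g) (hh : ContDiff ℝ (⊤ : ℕ∞) h) :
    pd b (pbrk P g h) x = ∑ μ, ∑ ν, (pd b (fun y => P y μ ν) x * pd μ g x * pd ν h x
      + P x μ ν * (pd b (fun y => pd μ g y) x * pd ν h x
                   + pd μ g x * pd b (fun y => pd ν h y) x)) := by
  have hg' : ∀ a, Differentiable ℝ (fun y => pd a g y) :=
    fun a => (contDiff_pd hg a).differentiable (by simp)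
  have hh' : ∀ a, Differentiable ℝ (fun y => pd a h y) :=
    fun a => (contDiff_pd hh a).differentiable (by simp)
  have hterm : ∀ μ ν, DifferentiableAt ℝ (fun y => P y μ ν * pd μ g y * pd ν h y) x :=
    fun μ ν => (((hP μ ν) x).mul ((hg' μ) x)).mul ((hh' ν) x)
  have : pbrk P g h = fun y => ∑ μ, ∑ ν, P y μ ν * pd μ g y * pd ν h y := rfl
  rw [this, pd_sum _ (fun μ => DifferentiableAt.fun_sum (fun ν _ => hterm μ ν))]
  refine Finset.sum_congr rfl fun μ _ => ?_
  rw [pd_sum _ (fun ν => hterm μ ν)]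
  refine Finset.sum_congr rfl fun ν _ => ?_
  rw [pd_mul ((hP μ ν x).fun_mul (hg' μ x)) (hh' ν x), pd_mul (hP μ ν x) (hg' μ x)]
  ring

end Aux

set_option maxHeartbeats 4000000 in
theorem A41_Pprime_is_Poisson (p12' p13' p24' a23 a24 a44 : ℝ) :
    (∀ x l μ ν, schouten (P41' p12' p13' p24' a23 a24 a44) l μ ν x = 0) ∧
    (∀ f g h : (Fin 4 → ℝ) → ℝ, ContDiff ℝ (⊤ : ℕ∞) f → ContDiff ℝ (⊤ : ℕ∞) g → ContDiff ℝ (⊤ : ℕ∞) h →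
      ∀ x, pbrk (P41' p12' p13' p24' a23 a24 a44) f
              (pbrk (P41' p12' p13' p24' a23 a24 a44) g h) x
        + pbrk (P41' p12' p13' p24' a23 a24 a44) g
              (pbrk (P41' p12' p13' p24' a23 a24 a44) h f) x
        + pbrk (P41' p12' p13' p24' a23 a24 a44) h
              (pbrk (P41' p12' p13' p24' a23 a24 a44) f g) x = 0) := by
  constructor
  · intro x l μ ν
    fin_cases l <;> fin_cases μ <;> fin_cases ν <;>
      simp (disch := fun_prop) [schouten, P41', Fin.sum_univ_four, pd_add, pd_sub, pd_mul,
        pd_const, pd_coord, pd_neg, Matrix.vecHead, Matrix.vecTail] <;> ring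
  · intro f g h hf hg hh x
    have hP : ∀ μ ν, Differentiable ℝ (fun y => P41' p12' p13' p24' a23 a24 a44 y μ ν) := by
      intro μ ν; fin_cases μ <;> fin_cases ν <;> simp [P41'] <;> fun_prop
    conv_lhs => rw [pbrk, pbrk, pbrk]
    simp only [pd_pbrk hP hg hh, pd_pbrk hP hh hf, pd_pbrk hP hf hg]
    simp (disch := fun_prop) [Fin.sum_univ_four, P41', pd_add, pd_sub, pd_mul,
      pd_const, pd_coord, pd_neg, Matrix.vecHead, Matrix.vecTail]
    simp only [pd_pd_symm hf 1 0, pd_pd_symm hf 2 0, pd_pd_symm hf 3 0,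
      pd_pd_symm hf 2 1, pd_pd_symm hf 3 1, pd_pd_symm hf 3 2,
      pd_pd_symm hg 1 0, pd_pd_symm hg 2 0, pd_pd_symm hg 3 0,
      pd_pd_symm hg 2 1, pd_pd_symm hg 3 1, pd_pd_symm hg 3 2,
      pd_pd_symm hh 1 0, pd_pd_symm hh 2 0, pd_pd_symm hh 3 0,
      pd_pd_symm hh 2 1, pd_pd_symm hh 3 1, pd_pd_symm hh 3 2]
    ring
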